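/- Let A be a finite nonempty set of size m, let w : A → ℝ, and set λ := (∑_{x∈A} w(x))/m. Then ∑_{k=1}^{m} (min over subsets S ⊆ A with |S| = k of ∑_{x∈S}(w(x) − λ)) = −∑_{{x,y}⊆A, x≠y} max(w(x), w(y)) + λ·m(m−1)/2. -/

import Mathlib

/-!
Add the elements of `A` one at a time in increasing order of weight, so that the new element `a`
has maximal weight. For `k` below the old size a minimal `k`-subset can avoid `a` (swap it for a
lighter element), so these minima do not change; the new term `k = #A` is the whole sum; and every
new ordered pair contains `a`, so has maximum `w a`. This gives, by induction,
`2 ∑_k min_k + ∑_{x ≠ y} max (w x) (w y) = 2 #A ∑_{x ∈ A} w x`,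
and the theorem is this identity for the deviations `w - λ`, whose total is `0`.
-/

open Finset

theorem sum_offDiag_insert {α γ : Type*} [AddCommMonoid γ] [DecidableEq α] {s : Finset α} {a : α}
    (ha : a ∉ s) (g : α × α → γ) :
    ∑ p ∈ (insert a s).offDiag, g p = ∑ p ∈ s.offDiag, g p + ∑ x ∈ s, (g (a, x) + g (x, a)) := by
  have hdisj₁ : Disjoint s.offDiag ({a} ×ˢ s) := by
    simp only [disjoint_left, mem_offDiag, mem_product, mem_singleton]
    grind
  have hdisj₂ : Disjoint (s.offDiag ∪ {a} ×ˢ s) (s ×ˢ {a}) := by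
    simp only [disjoint_left, mem_union, mem_offDiag, mem_product, mem_singleton]
    grind
  rw [offDiag_insert ha, sum_union hdisj₂, sum_union hdisj₁, sum_add_distrib, add_assoc,
    singleton_product, product_singleton, sum_map, sum_map]
  rfl

section MinSubsetSum

variable {α β : Type*} [AddCommMonoid β] [LinearOrder β]

-- Junk value `0` when `#s < k`, where there is no `k`-subset.
noncomputable def minSubsetSum (s : Finset α) (f : α → β) (k : ℕ) : β :=
  if h : k ≤ #s then (s.powersetCard k).inf' (powersetCard_nonempty.mpr h) fun t => ∑ x ∈ t, f x
  else 0

theorem minSubsetSum_of_le {s : Finset α} {f : α → β} {k : ℕ} (h : k ≤ #s) :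
    minSubsetSum s f k
      = (s.powersetCard k).inf' (powersetCard_nonempty.mpr h) fun t => ∑ x ∈ t, f x :=
  dif_pos h

theorem minSubsetSum_card (s : Finset α) (f : α → β) : minSubsetSum s f #s = ∑ x ∈ s, f x := by
  simp [minSubsetSum, powersetCard_self]

theorem minSubsetSum_insert_of_forall_le [IsOrderedAddMonoid β] [DecidableEq α] {s : Finset α}
    {f : α → β} {a : α} {k : ℕ} (hmax : ∀ x ∈ s, f x ≤ f a) (hk : k ≤ #s) :
    minSubsetSum (insert a s) f k = minSubsetSum s f k := by
  have hk' : k ≤ #(insert a s) := hk.trans (card_le_card (subset_insert a s))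
  rw [minSubsetSum_of_le hk, minSubsetSum_of_le hk']
  refine le_antisymm (le_inf' _ _ fun t ht => inf'_le _ ?_) (le_inf' _ _ fun t ht => ?_)
  · exact powersetCard_mono (subset_insert a s) ht
  obtain ⟨hts, htk⟩ := mem_powersetCard.mp ht
  by_cases hat : a ∈ t
  · -- exchange `a` for an element of `s` outside `t`, which weighs no more than `a`
    have htpos : 0 < #t := card_pos.mpr ⟨a, hat⟩
    have hcard : #(t.erase a) < #s := by rw [card_erase_of_mem hat]; omega
    obtain ⟨y, hys, hyt⟩ := exists_mem_notMem_of_card_lt_card hcard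
    have hmem : insert y (t.erase a) ∈ s.powersetCard k := by
      refine mem_powersetCard.mpr ⟨insert_subset hys fun x hx => ?_, ?_⟩
      · exact (mem_insert.mp (hts (mem_of_mem_erase hx))).resolve_left (ne_of_mem_erase hx)
      · rw [card_insert_of_notMem hyt, card_erase_of_mem hat]
        omega
    calc (s.powersetCard k).inf' _ (fun t => ∑ x ∈ t, f x)
        ≤ ∑ x ∈ insert y (t.erase a), f x := inf'_le _ hmem
      _ = f y + ∑ x ∈ t.erase a, f x := sum_insert hyt
      _ ≤ f a + ∑ x ∈ t.erase a, f x := by gcongr; exact hmax y hys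
      _ = ∑ x ∈ t, f x := add_sum_erase t f hat
  · exact inf'_le _ (mem_powersetCard.mpr ⟨(subset_insert_iff_of_notMem hat).mp hts, htk⟩)

theorem two_nsmul_sum_minSubsetSum_add_sum_offDiag_max [IsOrderedAddMonoid β] [DecidableEq α]
    (s : Finset α) (f : α → β) :
    2 • ∑ k ∈ Icc 1 #s, minSubsetSum s f k + ∑ p ∈ s.offDiag, max (f p.1) (f p.2)
      = (2 * #s) • ∑ x ∈ s, f x := by
  induction s using Finset.induction_on_max_value f with
  | empty => simp
  | insert a s ha hmax ih =>
    have hpairs : ∑ x ∈ s, (max (f a) (f x) + max (f x) (f a)) = (2 * #s) • f a :=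
      calc ∑ x ∈ s, (max (f a) (f x) + max (f x) (f a)) = ∑ _x ∈ s, 2 • f a :=
            sum_congr rfl fun x hx => by
              rw [max_eq_left (hmax x hx), max_eq_right (hmax x hx), two_nsmul]
        _ = (2 * #s) • f a := by rw [sum_const, smul_smul, mul_comm]
    have hmins : ∑ k ∈ Icc 1 #s, minSubsetSum (insert a s) f k
        = ∑ k ∈ Icc 1 #s, minSubsetSum s f k :=
      sum_congr rfl fun k hk => minSubsetSum_insert_of_forall_le hmax (mem_Icc.mp hk).2
    rw [sum_offDiag_insert ha (fun p => max (f p.1) (f p.2)), card_insert_of_notMem ha,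
      sum_Icc_succ_top (by omega), hmins, ← card_insert_of_notMem ha, minSubsetSum_card,
      sum_insert ha, card_insert_of_notMem ha, hpairs, mul_add, mul_one, add_smul,
      smul_add (2 * #s), ← ih]
    abel

end MinSubsetSum

/-- For a finite nonempty set `A` of size `m`, weights `w : A → ℝ`, and mean
`λ = (∑_{x∈A} w x)/m`, the aggregated minima of deviation sums over subsets of each
cardinality `k = 1, …, m` equal the negative of the sum of pairwise maxima over unordered
pairs of distinct elements (written as half the sum over ordered pairs) plus `λ·m(m−1)/2`. -/
theorem aggregated_min_deviation_eq_neg_pair_max {α : Type*} [DecidableEq α]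
    (A : Finset α) (hA : A.Nonempty) (m : ℕ) (hm : A.card = m)
    (w : α → ℝ) (lam : ℝ) (hlam : lam = (∑ x ∈ A, w x) / (m : ℝ)) :
    ∑ k ∈ (Finset.Icc 1 m).attach,
        (A.powersetCard k.1).inf'
          (Finset.powersetCard_nonempty.mpr
            (by have h := Finset.mem_Icc.mp k.2; omega))
          (fun S => ∑ x ∈ S, (w x - lam))
      = -((∑ p ∈ A.offDiag, max (w p.1) (w p.2)) / 2)
        + lam * ((m : ℝ) * ((m : ℝ) - 1) / 2) := by
  have hm₀ : (m : ℝ) ≠ 0 := by rw [← hm]; exact_mod_cast hA.card_pos.ne'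
  have hmins : ∑ k ∈ (Icc 1 m).attach, (A.powersetCard k.1).inf'
      (powersetCard_nonempty.mpr (by have h := mem_Icc.mp k.2; omega))
      (fun S => ∑ x ∈ S, (w x - lam)) = ∑ k ∈ Icc 1 m, minSubsetSum A (fun x => w x - lam) k := by
    rw [← sum_attach (Icc 1 m)]
    exact sum_congr rfl fun k _ => (minSubsetSum_of_le (hm ▸ (mem_Icc.mp k.2).2)).symm
  have hdev : ∑ x ∈ A, (w x - lam) = 0 := by
    rw [sum_sub_distrib, sum_const, hm, nsmul_eq_mul, hlam, mul_div_cancel₀ _ hm₀, sub_self]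
  have hpairs : ∑ p ∈ A.offDiag, max (w p.1 - lam) (w p.2 - lam)
      = ∑ p ∈ A.offDiag, max (w p.1) (w p.2) - (m * m - m) * lam := by
    rw [← Nat.cast_mul, ← Nat.cast_sub (Nat.le_mul_self m), ← hm, ← offDiag_card, ← nsmul_eq_mul,
      ← sum_const, ← sum_sub_distrib]
    simp only [max_sub_sub_right]
  have key := two_nsmul_sum_minSubsetSum_add_sum_offDiag_max A (fun x => w x - lam)
  rw [hm, hdev, hpairs, smul_zero, two_nsmul] at key
  rw [hmins]
  linarith
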